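/- arXiv:2007.14202 — 2 statements merged into one kernel-verified Lean document; each statement's English description precedes it below -/
import Mathlib

section
/- Let X be a cubic surface in P^3 given by x_3·x_2·x_0 + x_0·x_1^2 + x_1^2·x_3 = 0 (equivalently x_0x_2x_3 + x_0^2x_1 + x_1^2x_3 = 0 after coordinate relabeling). Then X contains exactly four lines, namely {x_0 = x_1 = 0}, {x_1 = x_3 = 0}, {x_1 = x_2 = 0}, and {x_0 = x_3 = 0}. -/
/-- The cubic form `x₀x₂x₃ + x₀²x₁ + x₁²x₃` on `k⁴`, whose projective zero locus is
the cubic surface `X ⊂ ℙ³`. -/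
def cubicA4A1 {k : Type*} [Field k] (v : Fin 4 → k) : k :=
  v 0 * v 2 * v 3 + v 0 ^ 2 * v 1 + v 1 ^ 2 * v 3

/-!
Let `W ⊆ k⁴` be a plane on which the cubic form `F` vanishes. If `x₁` vanishes on `W`, then
`F = x₀x₂x₃` on `W`, and since a vector space over an infinite field is not the union of three
proper subspaces, one of `x₀, x₂, x₃` vanishes on `W` too.

Otherwise pick `u ∈ W` with `u₁ = 1` and a nonzero `w ∈ W` with `w₁ = 0`. Then the coefficients
of `t` and `t²` in `F(u + t w)` vanish. Replacing `u` by `u + c w` so as to kill `u₀` (if `w₀ ≠ 0`)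
or `u₃` (if `w₃ ≠ 0`) makes these equations contradictory, so `w` spans the `x₂`-axis, and then
they force `u₀ = u₃ = 0`: `W = {x₀ = x₃ = 0}`.
-/

open Module

theorem Module.Dual.exists_forall_mem_eq_zero_of_forall_prod_eq_zero {ι K M : Type*} [Fintype ι]
    [Field K] [Infinite K] [AddCommGroup M] [Module K M] (p : Submodule K M) (f : ι → Dual K M)
    (h : ∀ x ∈ p, ∏ i, f i x = 0) : ∃ i, ∀ x ∈ p, f i x = 0 := by
  by_contra! hf
  obtain ⟨x, hx, hx0⟩ := exists_forall_mem_ne_zero_of_forall_exists p f hf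
  exact Finset.prod_ne_zero_iff.2 (fun i _ => hx0 i) (h x hx)

section CoordPlane

variable (k : Type*) [Field k] {ι : Type*}

def coordPlane (i j : ι) : Submodule k (ι → k) :=
  LinearMap.ker ((LinearMap.proj i).prod (LinearMap.proj j))

variable {k}

theorem mem_coordPlane {i j : ι} {v : ι → k} : v ∈ coordPlane k i j ↔ v i = 0 ∧ v j = 0 := by
  simp [coordPlane]

theorem coe_coordPlane (i j : ι) : (coordPlane k i j : Set (ι → k)) = {v | v i = 0 ∧ v j = 0} :=
  Set.ext fun _ => mem_coordPlane

theorem finrank_coordPlane [Fintype ι] [DecidableEq ι] {i j : ι} (hij : i ≠ j) :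
    finrank k (coordPlane k i j) = Fintype.card ι - 2 := by
  let f : (ι → k) →ₗ[k] k × k := (LinearMap.proj i).prod (LinearMap.proj j)
  have hf : Function.Surjective f := fun x =>
    ⟨Pi.single i x.1 + Pi.single j x.2, by simp [f, hij, hij.symm]⟩
  have := f.finrank_range_add_finrank_ker
  rw [LinearMap.range_eq_top.2 hf, finrank_top, finrank_prod, finrank_self,
    finrank_fintype_fun_eq_card] at this
  change finrank k (LinearMap.ker f) = _
  omega

theorem eq_coordPlane_of_le {W : Submodule k (Fin 4 → k)} {i j : Fin 4} (hij : i ≠ j)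
    (hW : finrank k W = 2) (h : W ≤ coordPlane k i j) : W = coordPlane k i j :=
  Submodule.eq_of_le_of_finrank_eq h (by rw [hW, finrank_coordPlane hij]; rfl)

end CoordPlane

namespace cubicA4A1

variable {k : Type*} [Field k] {W : Submodule k (Fin 4 → k)}

theorem eq_coordPlane_of_forall_apply_one_eq_zero [Infinite k] (hW : finrank k W = 2)
    (hF : ∀ v ∈ W, cubicA4A1 v = 0) (h1 : ∀ v ∈ W, v 1 = 0) :
    W = coordPlane k 0 1 ∨ W = coordPlane k 1 3 ∨ W = coordPlane k 1 2 := by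
  let f : Fin 3 → Dual k (Fin 4 → k) := ![LinearMap.proj 0, LinearMap.proj 2, LinearMap.proj 3]
  have hprod : ∀ v ∈ W, ∏ i, f i v = 0 := fun v hv => by
    simpa [f, Fin.prod_univ_three, cubicA4A1, h1 v hv] using hF v hv
  obtain ⟨i, hi⟩ := Dual.exists_forall_mem_eq_zero_of_forall_prod_eq_zero W f hprod
  fin_cases i
  · exact .inl <| eq_coordPlane_of_le (by decide) hW fun v hv =>
      mem_coordPlane.2 ⟨hi v hv, h1 v hv⟩
  · exact .inr <| .inr <| eq_coordPlane_of_le (by decide) hW fun v hv =>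
      mem_coordPlane.2 ⟨h1 v hv, hi v hv⟩
  · exact .inr <| .inl <| eq_coordPlane_of_le (by decide) hW fun v hv =>
      mem_coordPlane.2 ⟨h1 v hv, hi v hv⟩

variable {u w : Fin 4 → k}

/-- The coefficients of `t` and `t²` in `F(u + t w)`, obtained from `t = 0, ±1, ∞`. -/
theorem linear_coeff_eq_zero_and_quadratic_coeff_eq_zero [NeZero (2 : k)]
    (hF : ∀ v ∈ W, cubicA4A1 v = 0) (hu : u ∈ W) (hw : w ∈ W) (hu1 : u 1 = 1) (hw1 : w 1 = 0) :
    u 0 * u 2 * w 3 + u 0 * w 2 * u 3 + w 0 * u 2 * u 3 + 2 * u 0 * w 0 + w 3 = 0 ∧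
      u 0 * w 2 * w 3 + w 0 * u 2 * w 3 + w 0 * w 2 * u 3 + w 0 ^ 2 = 0 := by
  have hFu := hF u hu
  have hFadd := hF _ (W.add_mem hu hw)
  have hFsub := hF _ (W.sub_mem hu hw)
  have hFw := hF w hw
  simp only [cubicA4A1, Pi.add_apply, Pi.sub_apply, hu1, hw1] at hFu hFadd hFsub hFw
  constructor <;> refine mul_left_cancel₀ (two_ne_zero (α := k)) ?_
  · linear_combination hFadd - hFsub - 2 * hFw
  · linear_combination hFadd + hFsub - 2 * hFu

theorem exists_mem_apply_one_eq_one_apply_eq_zero (hu : u ∈ W) (hw : w ∈ W) (hu1 : u 1 = 1)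
    (hw1 : w 1 = 0) {i : Fin 4} (hwi : w i ≠ 0) : ∃ u' ∈ W, u' 1 = 1 ∧ u' i = 0 :=
  ⟨u - (u i / w i) • w, W.sub_mem hu (W.smul_mem _ hw), by simp [hu1, hw1],
    by simp [div_mul_cancel₀ _ hwi]⟩

theorem apply_zero_eq_zero_of_apply_one_eq_zero [NeZero (2 : k)]
    (hF : ∀ v ∈ W, cubicA4A1 v = 0) (hu : u ∈ W) (hw : w ∈ W) (hu1 : u 1 = 1) (hw1 : w 1 = 0) :
    w 0 = 0 := by
  by_contra hw0
  obtain ⟨u', hu', hu'1, hu'0⟩ := exists_mem_apply_one_eq_one_apply_eq_zero hu hw hu1 hw1 hw0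
  have hu'3 : u' 3 = 0 := by simpa [cubicA4A1, hu'1, hu'0] using hF u' hu'
  obtain ⟨hlin, hquad⟩ := linear_coeff_eq_zero_and_quadratic_coeff_eq_zero hF hu' hw hu'1 hw1
  have hw3 : w 3 = 0 := by simpa [hu'0, hu'3] using hlin
  exact hw0 (by simpa [hu'0, hu'3, hw3] using hquad)

theorem apply_three_eq_zero_of_apply_one_eq_zero [NeZero (2 : k)]
    (hF : ∀ v ∈ W, cubicA4A1 v = 0) (hu : u ∈ W) (hw : w ∈ W) (hu1 : u 1 = 1) (hw1 : w 1 = 0) :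
    w 3 = 0 := by
  have hw0 := apply_zero_eq_zero_of_apply_one_eq_zero hF hu hw hu1 hw1
  by_contra hw3
  obtain ⟨u', hu', hu'1, hu'3⟩ := exists_mem_apply_one_eq_one_apply_eq_zero hu hw hu1 hw1 hw3
  have hu'0 : u' 0 = 0 := by simpa [cubicA4A1, hu'1, hu'3] using hF u' hu'
  exact hw3 (by simpa [hu'0, hu'3, hw0] using
    (linear_coeff_eq_zero_and_quadratic_coeff_eq_zero hF hu' hw hu'1 hw1).1)

theorem apply_zero_eq_zero_and_apply_three_eq_zero_of_apply_one_eq_one [NeZero (2 : k)]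
    (hF : ∀ v ∈ W, cubicA4A1 v = 0) (hu : u ∈ W) (hw : w ∈ W) (hu1 : u 1 = 1) (hw1 : w 1 = 0)
    (hw_ne : w ≠ 0) : u 0 = 0 ∧ u 3 = 0 := by
  have hw0 := apply_zero_eq_zero_of_apply_one_eq_zero hF hu hw hu1 hw1
  have hw3 := apply_three_eq_zero_of_apply_one_eq_zero hF hu hw hu1 hw1
  have hw2 : w 2 ≠ 0 := fun hw2 => hw_ne <| funext fun i => by fin_cases i <;> assumption
  have hlin : u 0 * u 3 = 0 := by
    simpa [hw0, hw3, hw2] using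
      (linear_coeff_eq_zero_and_quadratic_coeff_eq_zero hF hu hw hu1 hw1).1
  have hu := hF u hu
  simp only [cubicA4A1, hu1] at hu
  rcases mul_eq_zero.1 hlin with hu0 | hu3
  · exact ⟨hu0, by simpa [hu0] using hu⟩
  · exact ⟨by simpa [hu3] using hu, hu3⟩

theorem eq_coordPlane_zero_three_of_apply_one_ne_zero [NeZero (2 : k)] (hW : finrank k W = 2)
    (hF : ∀ v ∈ W, cubicA4A1 v = 0) {v : Fin 4 → k} (hv : v ∈ W) (hv1 : v 1 ≠ 0) :
    W = coordPlane k 0 3 := by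
  obtain ⟨w, hw1, hw_ne⟩ : ∃ w : W, (w : Fin 4 → k) 1 = 0 ∧ w ≠ 0 := by
    have : finrank k k < finrank k W := by rw [hW, finrank_self]; norm_num
    obtain ⟨w, hw, hw_ne⟩ := (Submodule.ne_bot_iff _).1 (LinearMap.ker_ne_bot_of_finrank_lt
      (f := (LinearMap.proj 1 : (Fin 4 → k) →ₗ[k] k).domRestrict W) this)
    exact ⟨w, hw, hw_ne⟩
  have hw_ne' : (w : Fin 4 → k) ≠ 0 := by simpa using hw_ne
  refine eq_coordPlane_of_le (by decide) hW fun x hx => mem_coordPlane.2 ?_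
  by_cases hx1 : x 1 = 0
  · have hu := W.smul_mem (v 1)⁻¹ hv
    have hu1 : ((v 1)⁻¹ • v) 1 = 1 := by simp [hv1]
    exact ⟨apply_zero_eq_zero_of_apply_one_eq_zero hF hu hx hu1 hx1,
      apply_three_eq_zero_of_apply_one_eq_zero hF hu hx hu1 hx1⟩
  · simpa [hx1] using apply_zero_eq_zero_and_apply_three_eq_zero_of_apply_one_eq_one hF
      (W.smul_mem (x 1)⁻¹ hx) w.2 (by simp [hx1]) hw1 hw_ne'

end cubicA4A1

theorem stmt_3_general (k : Type*) [Field k] [CharZero k]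
    (W : Submodule k (Fin 4 → k)) :
    (Module.finrank k W = 2 ∧ ∀ v ∈ W, cubicA4A1 v = 0) ↔
      ((W : Set (Fin 4 → k)) = {v | v 0 = 0 ∧ v 1 = 0} ∨
       (W : Set (Fin 4 → k)) = {v | v 1 = 0 ∧ v 3 = 0} ∨
       (W : Set (Fin 4 → k)) = {v | v 1 = 0 ∧ v 2 = 0} ∨
       (W : Set (Fin 4 → k)) = {v | v 0 = 0 ∧ v 3 = 0}) := by
  simp only [← coe_coordPlane, SetLike.coe_set_eq]
  constructor
  · rintro ⟨hW, hF⟩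
    by_cases h1 : ∀ v ∈ W, v 1 = 0
    · rcases cubicA4A1.eq_coordPlane_of_forall_apply_one_eq_zero hW hF h1 with h | h | h
      exacts [.inl h, .inr (.inl h), .inr (.inr (.inl h))]
    · push Not at h1
      obtain ⟨v, hv, hv1⟩ := h1
      exact .inr <| .inr <| .inr <|
        cubicA4A1.eq_coordPlane_zero_three_of_apply_one_ne_zero hW hF hv hv1
  · rintro (rfl | rfl | rfl | rfl) <;>
      exact ⟨by simp [finrank_coordPlane], fun v hv => by
        obtain ⟨hi, hj⟩ := mem_coordPlane.1 hv
        simp [cubicA4A1, hi, hj]⟩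

/-- the cubic surface `X = {x₀x₂x₃ + x₀²x₁ + x₁²x₃ = 0} ⊂ ℙ³` contains
exactly four lines, namely `{x₀ = x₁ = 0}`, `{x₁ = x₃ = 0}`, `{x₁ = x₂ = 0}` and
`{x₀ = x₃ = 0}`.  Here a line in `ℙ³` is (the projectivization of) a two-dimensional
linear subspace `W` of `k⁴`, and it lies on `X` iff the cubic form vanishes on `W`. -/
theorem stmt_3 (k : Type*) [Field k] [IsAlgClosed k] [CharZero k]
    (W : Submodule k (Fin 4 → k)) :
    (Module.finrank k W = 2 ∧ ∀ v ∈ W, cubicA4A1 v = 0) ↔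
      ((W : Set (Fin 4 → k)) = {v | v 0 = 0 ∧ v 1 = 0} ∨
       (W : Set (Fin 4 → k)) = {v | v 1 = 0 ∧ v 3 = 0} ∨
       (W : Set (Fin 4 → k)) = {v | v 1 = 0 ∧ v 2 = 0} ∨
       (W : Set (Fin 4 → k)) = {v | v 0 = 0 ∧ v 3 = 0}) :=
  stmt_3_general k W
end

section
/- Let C ⊂ P^2 be the quartic curve defined by (x_0x_2 + x_1^2)^2 − x_0^4 = 0. Then the subgroup of PGL_3(k) preserving C consists exactly of the transformations (x_0 : x_1 : x_2) ↦ (ζ^2 x_0 : ζx_1 − (ζa/2)x_0 : x_2 + a x_1 − (a^2/4)x_0) with ζ^4 = 1 and a ∈ k; in particular this group is isomorphic to Ga ⋊ μ_4 and its identity component is isomorphic to Ga. -/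
/-!
The quartic splits as `C = Q₊ ∪ Q₋` with `Q_ε : x₀x₂ + x₁² + εx₀² = 0`, and
`t ↦ (1 : t : -ε - t²)` parametrises `Q_ε`. If `g` preserves `C`, then for infinitely many `t`
the image of this point lies on one fixed `Q_δ`; a quadratic form vanishing at infinitely many
points of the parametrisation is a multiple of the equation of `Q_ε`, so `Q_δ ∘ g = λ Q_ε`.
Invertibility of `g` forces `λ ≠ 0`, hence `g` exchanges or fixes the two conics rather than
collapsing both onto one. Evaluating the two resulting identities at a few vectors shows that
the first row of `g` is `(g₀₀, 0, 0)` and determines the remaining entries up to the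
parameters `ζ = g₁₁ / g₂₂`, `a = g₂₁ / g₂₂`.
-/

open Matrix

/-- The quartic form `(x₀x₂ + x₁²)² − x₀⁴` defining the curve `C ⊂ ℙ²`. -/
def quarticC {k : Type*} [Field k] (v : Fin 3 → k) : k :=
  (v 0 * v 2 + v 1 ^ 2) ^ 2 - v 0 ^ 4

/-- `g ∈ GL₃(k)` preserves the plane curve with (homogeneous) equation `F = 0` iff the
linear action of `g` on `k³` maps the affine cone over the curve onto itself. This is the
condition that the induced element of `PGL₃(k)` maps the curve to itself. -/
def PreservesPlaneCurve {k : Type*} [Field k] (F : (Fin 3 → k) → k)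
    (g : GL (Fin 3) k) : Prop :=
  ∀ v : Fin 3 → k, F ((g : Matrix (Fin 3) (Fin 3) k).mulVec v) = 0 ↔ F v = 0

/-- The matrix of the transformation
`(x₀:x₁:x₂) ↦ (ζ²x₀ : ζx₁ − (ζa/2)x₀ : x₂ + ax₁ − (a²/4)x₀)`. -/
def quarticAut {k : Type*} [Field k] (ζ a : k) : Matrix (Fin 3) (Fin 3) k :=
  !![ζ ^ 2, 0, 0; -(ζ * a / 2), ζ, 0; -(a ^ 2 / 4), a, 1]

namespace QuarticCurve

variable {k : Type*} [Field k]

def conicForm (ε : k) (v : Fin 3 → k) : k :=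
  v 0 * v 2 + v 1 ^ 2 + ε * v 0 ^ 2

def conicMatrix (ε : k) : Matrix (Fin 3) (Fin 3) k :=
  !![ε, 0, 1; 0, 1, 0; 0, 0, 0]

def conicPoint (ε t : k) : Fin 3 → k :=
  ![1, t, -ε - t ^ 2]

lemma conicForm_conicPoint (ε t : k) : conicForm ε (conicPoint ε t) = 0 := by
  simp [conicForm, conicPoint]

lemma quarticC_eq_conicForm_mul {ε : k} (hε : ε ^ 2 = 1) (v : Fin 3 → k) :
    quarticC v = conicForm ε v * conicForm (-ε) v := by
  unfold quarticC conicForm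
  linear_combination v 0 ^ 4 * hε

lemma conicForm_mulVec (ε : k) (M : Matrix (Fin 3) (Fin 3) k) (v : Fin 3 → k) :
    conicForm ε (M *ᵥ v) = v ⬝ᵥ (Mᵀ * conicMatrix ε * M) *ᵥ v := by
  rw [← mulVec_mulVec, ← mulVec_mulVec, dotProduct_mulVec, ← mulVec_transpose,
    transpose_transpose]
  simp only [conicForm, conicMatrix, dotProduct, mulVec, Fin.sum_univ_three, of_apply, cons_val',
    cons_val_fin_one, cons_val_zero, cons_val_one, cons_val]
  ring

lemma quartic_coeffs_eq_zero_of_infinite {c₀ c₁ c₂ c₃ c₄ : k}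
    (h : {t : k | c₀ + c₁ * t + c₂ * t ^ 2 + c₃ * t ^ 3 + c₄ * t ^ 4 = 0}.Infinite) :
    c₀ = 0 ∧ c₁ = 0 ∧ c₂ = 0 ∧ c₃ = 0 ∧ c₄ = 0 := by
  open Polynomial in
  have hp : C c₀ + C c₁ * X + C c₂ * X ^ 2 + C c₃ * X ^ 3 + C c₄ * X ^ 4 = 0 :=
    eq_zero_of_infinite_isRoot _ (by simpa using h)
  have hc (n : ℕ) := congrArg (coeff · n) hp
  exact ⟨by simpa using hc 0, by simpa [coeff_X] using hc 1, by simpa using hc 2,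
    by simpa using hc 3, by simpa using hc 4⟩

lemma dotProduct_mulVec_self_eq_smul_conicForm {S : Matrix (Fin 3) (Fin 3) k} {ε : k}
    (h : {t | conicPoint ε t ⬝ᵥ S *ᵥ conicPoint ε t = 0}.Infinite) (v : Fin 3 → k) :
    v ⬝ᵥ S *ᵥ v = (S 0 2 + S 2 0) * conicForm ε v := by
  have expand : ∀ t, conicPoint ε t ⬝ᵥ S *ᵥ conicPoint ε t =
      (S 0 0 - ε * (S 0 2 + S 2 0) + ε ^ 2 * S 2 2)
        + (S 0 1 + S 1 0 - ε * (S 1 2 + S 2 1)) * t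
        + (S 1 1 - (S 0 2 + S 2 0) + 2 * ε * S 2 2) * t ^ 2 + (-(S 1 2 + S 2 1)) * t ^ 3
        + S 2 2 * t ^ 4 := by
    intro t
    simp only [conicPoint, dotProduct, mulVec, Fin.sum_univ_three, cons_val_zero, cons_val_one,
      cons_val]
    ring
  simp only [expand] at h
  obtain ⟨h₀, h₁, h₂, h₃, h₄⟩ := quartic_coeffs_eq_zero_of_infinite h
  simp only [dotProduct, mulVec, Fin.sum_univ_three, conicForm]
  linear_combination v 0 ^ 2 * h₀ + v 0 * v 1 * h₁ + v 1 ^ 2 * h₂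
    - (v 1 * v 2 + ε * v 0 * v 1) * h₃
    + (v 2 ^ 2 - ε ^ 2 * v 0 ^ 2 - 2 * ε * v 1 ^ 2) * h₄

lemma exists_conicForm_mulVec_eq_smul [Infinite k] {M : Matrix (Fin 3) (Fin 3) k}
    (hM : ∀ v, quarticC v = 0 → quarticC (M *ᵥ v) = 0) {ε : k} (hε : ε ^ 2 = 1) :
    ∃ δ : k, δ ^ 2 = 1 ∧ ∃ l : k, ∀ v, conicForm δ (M *ᵥ v) = l * conicForm ε v := by
  have hcover : {t | conicForm 1 (M *ᵥ conicPoint ε t) = 0} ∪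
      {t | conicForm (-1) (M *ᵥ conicPoint ε t) = 0} = Set.univ := by
    refine Set.eq_univ_of_forall fun t => ?_
    have hC := hM _ (by rw [quarticC_eq_conicForm_mul hε, conicForm_conicPoint ε t, zero_mul])
    rw [quarticC_eq_conicForm_mul (one_pow 2)] at hC
    exact mul_eq_zero.mp hC
  obtain ⟨δ, hδ, h⟩ :
      ∃ δ : k, δ ^ 2 = 1 ∧ {t | conicForm δ (M *ᵥ conicPoint ε t) = 0}.Infinite := by
    rcases Set.infinite_union.mp (hcover ▸ Set.infinite_univ) with h | h
    exacts [⟨1, one_pow 2, h⟩, ⟨-1, by norm_num, h⟩]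
  simp only [conicForm_mulVec] at h
  exact ⟨δ, hδ, _, fun v => by
    rw [conicForm_mulVec, dotProduct_mulVec_self_eq_smul_conicForm h]⟩

lemma ne_zero_of_conicForm_mulVec_eq_smul {M : Matrix (Fin 3) (Fin 3) k}
    (hM : Function.Surjective M.mulVec) {δ ε l : k}
    (h : ∀ v, conicForm δ (M *ᵥ v) = l * conicForm ε v) : l ≠ 0 := by
  rintro rfl
  obtain ⟨v, hv⟩ := hM ![0, 1, 0]
  simpa [hv, conicForm] using h v

lemma entries_of_conicForm_mulVec [CharZero k] {M : Matrix (Fin 3) (Fin 3) k} {σ l m : k}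
    (hσ : σ ^ 2 = 1) (h₁ : ∀ v, conicForm σ (M *ᵥ v) = l * conicForm 1 v)
    (h₂ : ∀ v, conicForm (-σ) (M *ᵥ v) = m * conicForm (-1) v) :
    M 0 1 = 0 ∧ M 0 2 = 0 ∧ M 1 2 = 0 ∧ M 1 1 ^ 2 = l ∧ M 0 0 ^ 4 = l ^ 2 ∧
      M 0 0 * M 2 2 = l ∧ M 0 0 * M 2 0 + M 1 0 ^ 2 = 0 ∧
      M 0 0 * M 2 1 + 2 * M 1 0 * M 1 1 = 0 := by
  have at_vec : ∀ x y z : k, ∀ δ : k, conicForm δ (M *ᵥ ![x, y, z]) =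
      (M 0 0 * x + M 0 1 * y + M 0 2 * z) * (M 2 0 * x + M 2 1 * y + M 2 2 * z)
        + (M 1 0 * x + M 1 1 * y + M 1 2 * z) ^ 2
        + δ * (M 0 0 * x + M 0 1 * y + M 0 2 * z) ^ 2 := by
    intro x y z δ
    simp [conicForm, mulVec, dotProduct, Fin.sum_univ_three]
  have e₀ := h₁ ![1, 0, 0]
  have e₁ := h₁ ![0, 1, 0]
  have e₂ := h₁ ![0, 0, 1]
  have e₀₁ := h₁ ![1, 1, 0]
  have e₀₂ := h₁ ![1, 0, 1]
  have f₀ := h₂ ![1, 0, 0]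
  have f₁ := h₂ ![0, 1, 0]
  have f₂ := h₂ ![0, 0, 1]
  have f₀₂ := h₂ ![1, 0, 1]
  simp only [at_vec] at e₀ e₁ e₂ e₀₁ e₀₂ f₀ f₁ f₂ f₀₂
  simp only [conicForm, cons_val_zero, cons_val_one, cons_val]
    at e₀ e₁ e₂ e₀₁ e₀₂ f₀ f₁ f₂ f₀₂
  have h02 : M 0 2 = 0 := pow_eq_zero_iff two_ne_zero |>.mp <| by
    linear_combination σ / 2 * (e₂ - f₂) - M 0 2 ^ 2 * hσ
  have h12 : M 1 2 = 0 := pow_eq_zero_iff two_ne_zero |>.mp <| by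
    linear_combination e₂ - (M 2 2 + σ * M 0 2) * h02
  rw [h02, h12] at e₀₂ f₀₂
  have h22 : M 0 0 * M 2 2 = l := by linear_combination e₀₂ - e₀
  have hlm : l = m := by linear_combination f₀₂ - f₀ - h22
  have h01 : M 0 1 = 0 := pow_eq_zero_iff two_ne_zero |>.mp <| by
    linear_combination σ / 2 * (e₁ - f₁) - M 0 1 ^ 2 * hσ + σ / 2 * hlm
  have h00 : M 0 0 ^ 2 = σ * l := by
    linear_combination σ / 2 * (e₀ - f₀) - M 0 0 ^ 2 * hσ - σ / 2 * hlm
  rw [h01] at e₁ e₀₁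
  refine ⟨h01, h02, h12, by linear_combination e₁, ?_, h22,
    by linear_combination (e₀ + f₀ + hlm) / 2, ?_⟩
  · linear_combination (M 0 0 ^ 2 + σ * l) * h00 + l ^ 2 * hσ
  · linear_combination e₀₁ - e₀ - e₁

lemma exists_eq_smul_quarticAut_of_entries [CharZero k] {M : Matrix (Fin 3) (Fin 3) k} {l : k}
    (hl : l ≠ 0)
    (h01 : M 0 1 = 0) (h02 : M 0 2 = 0) (h12 : M 1 2 = 0) (h11 : M 1 1 ^ 2 = l)
    (h00 : M 0 0 ^ 4 = l ^ 2) (h22 : M 0 0 * M 2 2 = l) (h20 : M 0 0 * M 2 0 + M 1 0 ^ 2 = 0)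
    (h21 : M 0 0 * M 2 1 + 2 * M 1 0 * M 1 1 = 0) :
    ∃ (c : kˣ) (ζ a : k), ζ ^ 4 = 1 ∧ M = (c : k) • quarticAut ζ a := by
  have hM00 : M 0 0 ≠ 0 := fun h => hl <| pow_eq_zero_iff two_ne_zero |>.mp <| by
    rw [← h00, h, zero_pow four_ne_zero]
  have hM22 : M 2 2 ≠ 0 := fun h => hl <| by rw [← h22, h, mul_zero]
  refine ⟨Units.mk0 _ hM22, M 1 1 / M 2 2, M 2 1 / M 2 2, ?_, ?_⟩
  · have : M 2 2 ^ 4 = l ^ 2 := mul_left_cancel₀ (pow_ne_zero 2 hl) <| by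
      linear_combination -M 2 2 ^ 4 * h00
        + (M 0 0 ^ 2 * M 2 2 ^ 2 + l ^ 2) * (M 0 0 * M 2 2 + l) * h22
    field_simp
    linear_combination (M 1 1 ^ 2 + l) * h11 - this
  · ext i j
    fin_cases i <;> fin_cases j <;>
      simp only [Fin.zero_eta, Fin.mk_one, Fin.reduceFinMk, Fin.isValue, quarticAut,
        Matrix.smul_apply, smul_eq_mul, Units.val_mk0, h01, h02, h12, mul_zero, mul_one, of_apply,
        cons_val', cons_val_fin_one, cons_val_zero, cons_val_one, cons_val] <;>
      field_simp
    · linear_combination h22 - h11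
    · refine mul_left_cancel₀ hM00 ?_
      linear_combination 2 * M 1 0 * h22 + M 1 1 * h21 - 2 * M 1 0 * h11
    · refine mul_left_cancel₀ (pow_ne_zero 2 hM00) ?_
      linear_combination 4 * M 0 0 * M 2 0 * h22 + 4 * l * h20
        + (M 0 0 * M 2 1 - 2 * M 1 0 * M 1 1) * h21 + 4 * M 1 0 ^ 2 * h11

lemma exists_eq_smul_quarticAut_of_preserves [CharZero k] {M : Matrix (Fin 3) (Fin 3) k}
    (hM : Function.Surjective M.mulVec) (hC : ∀ v, quarticC v = 0 → quarticC (M *ᵥ v) = 0) :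
    ∃ (c : kˣ) (ζ a : k), ζ ^ 4 = 1 ∧ M = (c : k) • quarticAut ζ a := by
  obtain ⟨σ, hσ, l, h₁⟩ := exists_conicForm_mulVec_eq_smul hC (one_pow 2)
  obtain ⟨δ, hδ, m, h₂⟩ := exists_conicForm_mulVec_eq_smul hC (ε := -1) (by norm_num)
  have hl := ne_zero_of_conicForm_mulVec_eq_smul hM h₁
  obtain rfl : δ = -σ := by
    refine (sq_eq_sq_iff_eq_or_eq_neg.mp (hδ.trans hσ.symm)).resolve_left ?_
    rintro rfl
    have e₀ := (h₁ ![1, 0, 0]).symm.trans (h₂ ![1, 0, 0])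
    have e₁ := (h₁ ![0, 1, 0]).symm.trans (h₂ ![0, 1, 0])
    simp only [conicForm, cons_val_zero, cons_val_one, cons_val] at e₀ e₁
    exact hl (by linear_combination (e₀ + e₁) / 2)
  obtain ⟨h01, h02, h12, h11, h00, h22, h20, h21⟩ := entries_of_conicForm_mulVec hσ h₁ h₂
  exact exists_eq_smul_quarticAut_of_entries hl h01 h02 h12 h11 h00 h22 h20 h21

lemma quarticC_smul (c : k) (v : Fin 3 → k) : quarticC (c • v) = c ^ 4 * quarticC v := by
  simp only [quarticC, Pi.smul_apply, smul_eq_mul]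
  ring

lemma quarticC_quarticAut_mulVec [CharZero k] {ζ : k} (hζ : ζ ^ 4 = 1) (a : k)
    (v : Fin 3 → k) : quarticC (quarticAut ζ a *ᵥ v) = quarticC v := by
  simp only [quarticC, quarticAut, mulVec, dotProduct, Fin.sum_univ_three, of_apply, cons_val',
    cons_val_fin_one, cons_val_zero, cons_val_one, cons_val]
  linear_combination ((v 0 * v 2 + v 1 ^ 2) ^ 2 - (ζ ^ 4 + 1) * v 0 ^ 4) * hζ

lemma quarticAut_mul [CharZero k] (ζ a ζ' a' : k) :
    quarticAut ζ a * quarticAut ζ' a' = quarticAut (ζ * ζ') (a' + ζ' * a) := by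
  ext i j
  fin_cases i <;> fin_cases j <;>
    simp only [Fin.zero_eta, Fin.mk_one, Fin.reduceFinMk, Fin.isValue, quarticAut, mul_apply,
      Fin.sum_univ_three, of_apply, cons_val', cons_val_fin_one, cons_val_zero, cons_val_one,
      cons_val] <;>
    ring

lemma quarticAut_eq_smul_quarticAut {c ζ a ζ' a' : k}
    (h : quarticAut ζ a = c • quarticAut ζ' a') : ζ = ζ' ∧ a = a' := by
  have h₂₂ := congrFun (congrFun h 2) 2
  have h₁₁ := congrFun (congrFun h 1) 1
  have h₂₁ := congrFun (congrFun h 2) 1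
  simp only [quarticAut, Matrix.smul_apply, smul_eq_mul, mul_one, of_apply, cons_val',
    cons_val_fin_one, cons_val_zero, cons_val_one, cons_val] at h₂₂ h₁₁ h₂₁
  subst h₂₂
  exact ⟨by simpa using h₁₁, by simpa using h₂₁⟩

end QuarticCurve

open QuarticCurve in
theorem stmt_4_general (k : Type*) [Field k] [CharZero k] :
    (∀ g : GL (Fin 3) k,
      PreservesPlaneCurve quarticC g ↔
        ∃ (c : kˣ) (ζ a : k), ζ ^ 4 = 1 ∧
          (g : Matrix (Fin 3) (Fin 3) k) = (c : k) • quarticAut ζ a) ∧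
    (∀ ζ a ζ' a' : k,
      quarticAut ζ a * quarticAut ζ' a' = quarticAut (ζ * ζ') (a' + ζ' * a)) ∧
    (∀ (c : k) (ζ a ζ' a' : k), ζ ^ 4 = 1 → ζ' ^ 4 = 1 →
      quarticAut ζ a = c • quarticAut ζ' a' → ζ = ζ' ∧ a = a') := by
  refine ⟨fun g => ⟨fun hg => ?_, ?_⟩, quarticAut_mul,
    fun _ _ _ _ _ _ _ => quarticAut_eq_smul_quarticAut⟩
  · exact exists_eq_smul_quarticAut_of_preserves (mulVec_surjective_iff_isUnit.mpr g.isUnit)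
      fun v => (hg v).mpr
  · rintro ⟨c, ζ, a, hζ, hg⟩ v
    rw [hg, smul_mulVec, quarticC_smul, quarticC_quarticAut_mulVec hζ,
      mul_eq_zero, or_iff_right (pow_ne_zero 4 c.ne_zero)]

/-- the subgroup of `PGL₃(k)` preserving the quartic
`C = {(x₀x₂ + x₁²)² = x₀⁴}` consists exactly of the transformations
`(x₀:x₁:x₂) ↦ (ζ²x₀ : ζx₁ − (ζa/2)x₀ : x₂ + ax₁ − (a²/4)x₀)` with `ζ⁴ = 1`, `a ∈ k`;
moreover these transformations compose by the rule of the semidirect product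
`Ga ⋊ μ₄` (with `μ₄` acting through `ζ ↦ ζ`), and distinct parameters give distinct
elements of `PGL₃(k)`; in particular `Aut(ℙ², C) ≅ Ga ⋊ μ₄` and its identity component
(the subgroup `ζ = 1`) is isomorphic to `Ga`. -/
theorem stmt_4 (k : Type*) [Field k] [IsAlgClosed k] [CharZero k] :
    (∀ g : GL (Fin 3) k,
      PreservesPlaneCurve quarticC g ↔
        ∃ (c : kˣ) (ζ a : k), ζ ^ 4 = 1 ∧
          (g : Matrix (Fin 3) (Fin 3) k) = (c : k) • quarticAut ζ a) ∧
    (∀ ζ a ζ' a' : k,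
      quarticAut ζ a * quarticAut ζ' a' = quarticAut (ζ * ζ') (a' + ζ' * a)) ∧
    (∀ (c : k) (ζ a ζ' a' : k), ζ ^ 4 = 1 → ζ' ^ 4 = 1 →
      quarticAut ζ a = c • quarticAut ζ' a' → ζ = ζ' ∧ a = a') :=
  stmt_4_general k
end
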